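/- arXiv:1702.04067 — 7 statements merged into one kernel-verified Lean document; each statement's English description precedes it below -/
import Mathlib

section
/- If g is a goal function for a Boolean function f on n variables, then f can be recovered from g up to complementation: the functions whose goal function is g are exactly f and its negation ¬f. -/
attribute [local instance] Classical.propDecidable

/-- `b'` extends the partial assignment `b`: it agrees on all non-`*` coordinates of `b`. -/
def Extends {n : ℕ} (b' b : Fin n → Option Bool) : Prop :=
  ∀ i v, b i = some v → b' i = some v

/-- A total assignment `x` extends the partial assignment `b`. -/
def TExtends {n : ℕ} (x : Fin n → Bool) (b : Fin n → Option Bool) : Prop :=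
  ∀ i v, b i = some v → x i = v

/-- `b` is a certificate of `f`: `f` is constant on all total extensions of `b`. -/
def IsCert {n : ℕ} (f : (Fin n → Bool) → Bool) (b : Fin n → Option Bool) : Prop :=
  ∀ x y, TExtends x b → TExtends y b → f x = f y

/-- `b` is a `k`-certificate of `f`: it forces `f` to the value `k`. -/
def IsKCert {n : ℕ} (f : (Fin n → Bool) → Bool) (k : Bool) (b : Fin n → Option Bool) : Prop :=
  ∀ x, TExtends x b → f x = k

/-- A certificate is minimal if no proper restriction of it is a certificate. -/
def MinCert {n : ℕ} (f : (Fin n → Bool) → Bool) (c : Fin n → Option Bool) : Prop :=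
  IsCert f c ∧ ∀ c', Extends c c' → c' ≠ c → ¬ IsCert f c'

/-- A `k`-certificate is minimal if no proper restriction of it is a `k`-certificate. -/
def MinKCert {n : ℕ} (f : (Fin n → Bool) → Bool) (k : Bool) (c : Fin n → Option Bool) : Prop :=
  IsKCert f k c ∧ ∀ c', Extends c c' → c' ≠ c → ¬ IsKCert f k c'

/-- Monotone utility function: filling in `*`'s never decreases the value. -/
def Mono {n : ℕ} (g : (Fin n → Option Bool) → ℕ) : Prop :=
  ∀ b b', Extends b' b → g b ≤ g b'

/-- Submodular utility function: marginal gains shrink under extension. -/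
def Submod {n : ℕ} (g : (Fin n → Option Bool) → ℕ) : Prop :=
  ∀ b b' (i : Fin n) (ℓ : Bool), Extends b' b → b i = none → b' i = none →
    g (Function.update b' i (some ℓ)) + g b ≤ g (Function.update b i (some ℓ)) + g b'

/-- `g` is a goal function for `f` with goal value `Q`. -/
def GoalFn {n : ℕ} (f : (Fin n → Bool) → Bool) (g : (Fin n → Option Bool) → ℕ)
    (Q : ℕ) : Prop :=
  Mono g ∧ Submod g ∧ ∀ b, g b = Q ↔ IsCert f b

/-- `g` is a `k`-goal function for `f` with goal value `Q`. -/
def KGoalFn {n : ℕ} (f : (Fin n → Bool) → Bool) (k : Bool)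
    (g : (Fin n → Option Bool) → ℕ) (Q : ℕ) : Prop :=
  Mono g ∧ Submod g ∧ (∀ b, IsKCert f k b → g b = Q) ∧ (∀ b, ¬ IsKCert f k b → g b < Q)

/-- The goal value `Γ(f)`: the minimum goal value of any goal function for `f`. -/
noncomputable def gamma {n : ℕ} (f : (Fin n → Bool) → Bool) : ℕ :=
  sInf {Q | ∃ g, GoalFn f g Q}

/-- The `k`-goal value `Γ^k(f)`. -/
noncomputable def gammaK {n : ℕ} (f : (Fin n → Bool) → Bool) (k : Bool) : ℕ :=
  sInf {Q | ∃ g, KGoalFn f k g Q}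

/-- The weight of a partial assignment: the number of non-`*` coordinates. -/
noncomputable def wt {n : ℕ} (b : Fin n → Option Bool) : ℕ :=
  (Finset.univ.filter (fun i => (b i).isSome)).card

/-- `f` depends on its `i`-th variable. -/
def DependsOnVar {n : ℕ} (f : (Fin n → Bool) → Bool) (i : Fin n) : Prop :=
  ∃ x, f (Function.update x i true) ≠ f (Function.update x i false)

/-!
A goal function `g` for `f` reaches its goal value `Q` on every total assignment, so `g` determines
`Q` and hence the set of certificates of `f`. Among them, the partial assignments with a single `*`
record along which edges of the cube `{0,1}^n` the function `f` is constant. If `f'` has the same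
certificates, then on every edge `f` is constant iff `f'` is, so the truth value of `f' x = f x` does
not change along edges and, the cube being connected, is constant.
-/

section UpdateInvariant

variable {ι β : Type*} [DecidableEq ι]

lemma apply_update_eq_of_update_true_eq_update_false (F : (ι → Bool) → β)
    (hF : ∀ x i, F (Function.update x i true) = F (Function.update x i false))
    (x : ι → Bool) (i : ι) (t : Bool) : F (Function.update x i t) = F x := by
  conv_rhs => rw [← Function.update_eq_self i x]
  cases t <;> cases x i <;> simp only [hF]

lemma eq_of_update_true_eq_update_false [Fintype ι] (F : (ι → Bool) → β)
    (hF : ∀ x i, F (Function.update x i true) = F (Function.update x i false))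
    (x y : ι → Bool) : F x = F y := by
  suffices ∀ S : Finset ι, ∀ x, (∀ i ∉ S, x i = y i) → F x = F y from
    this Finset.univ x (by simp)
  intro S
  induction S using Finset.induction_on with
  | empty => exact fun x hx => congrArg F (funext fun i => hx i (Finset.notMem_empty i))
  | insert a S _ ih =>
    intro x hx
    rw [← apply_update_eq_of_update_true_eq_update_false F hF x a (y a)]
    refine ih _ fun i hi => ?_
    by_cases hia : i = a
    · subst hia; simp
    · rw [Function.update_of_ne hia]
      exact hx i (by simp [hia, hi])

end UpdateInvariant

lemma Bool.eq_iff_eq_of_eq_iff_eq {a b a' b' : Bool} (h : a = b ↔ a' = b') :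
    a' = a ↔ b' = b := by
  revert h; cases a <;> cases b <;> cases a' <;> cases b' <;> decide

section Certificates

variable {n : ℕ}

lemma isCert_some (f : (Fin n → Bool) → Bool) (x : Fin n → Bool) :
    IsCert f (fun i => some (x i)) := by
  intro y z hy hz
  rw [funext fun i => hy i (x i) rfl, funext fun i => hz i (x i) rfl]

lemma isCert_not_iff (f : (Fin n → Bool) → Bool) (b : Fin n → Option Bool) :
    IsCert (fun x => !(f x)) b ↔ IsCert f b :=
  forall₄_congr fun x y _ _ => by simp only [Bool.not_inj_iff]

lemma tExtends_update_none_iff (x y : Fin n → Bool) (i : Fin n) :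
    TExtends y (Function.update (fun j => some (x j)) i none) ↔
      y = Function.update x i (y i) := by
  constructor
  · intro hy
    funext j
    by_cases hji : j = i
    · subst hji; simp
    · simp [Function.update_of_ne hji, hy j (x j) (by simp [hji])]
  · intro hy j v hj
    by_cases hji : j = i
    · subst hji; simp at hj
    · rw [hy, Function.update_of_ne hji]
      simpa [Function.update_of_ne hji] using hj

lemma isCert_update_none_iff (f : (Fin n → Bool) → Bool) (x : Fin n → Bool) (i : Fin n) :
    IsCert f (Function.update (fun j => some (x j)) i none) ↔
      f (Function.update x i true) = f (Function.update x i false) := by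
  have hext (t : Bool) :
      TExtends (Function.update x i t) (Function.update (fun j => some (x j)) i none) := by
    rw [tExtends_update_none_iff]; simp
  refine ⟨fun h => h _ _ (hext true) (hext false), fun h y z hy hz => ?_⟩
  rw [tExtends_update_none_iff] at hy hz
  rw [hy, hz]
  cases y i <;> cases z i <;> simp [h]

theorem eq_or_eq_not_of_isCert_iff {f f' : (Fin n → Bool) → Bool}
    (h : ∀ b, IsCert f b ↔ IsCert f' b) : f' = f ∨ f' = fun x => !(f x) := by
  have hedge (x : Fin n → Bool) (i : Fin n) :
      (f (Function.update x i true) = f (Function.update x i false) ↔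
        f' (Function.update x i true) = f' (Function.update x i false)) := by
    rw [← isCert_update_none_iff, ← isCert_update_none_iff, h]
  have hagree : ∀ x y : Fin n → Bool, (f' x = f x) = (f' y = f y) :=
    eq_of_update_true_eq_update_false (fun x => f' x = f x) fun x i =>
      propext (Bool.eq_iff_eq_of_eq_iff_eq (hedge x i))
  by_cases h₀ : f' (fun _ => false) = f (fun _ => false)
  · exact Or.inl (funext fun x => by rwa [hagree x])
  · exact Or.inr (funext fun x => Bool.eq_not_iff.mpr fun hx => h₀ (by rwa [← hagree x]))

end Certificates

namespace GoalFn

variable {n : ℕ} {f f' : (Fin n → Bool) → Bool} {g : (Fin n → Option Bool) → ℕ} {Q Q' : ℕ}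

lemma eq_goal (hg : GoalFn f g Q) (hg' : GoalFn f' g Q') : Q = Q' := by
  rw [← (hg.2.2 _).mpr (isCert_some f (fun _ => false)),
    (hg'.2.2 _).mpr (isCert_some f' (fun _ => false))]

lemma isCert_iff (hg : GoalFn f g Q) (hg' : GoalFn f' g Q') (b : Fin n → Option Bool) :
    IsCert f b ↔ IsCert f' b := by
  rw [← hg.2.2, ← hg'.2.2, hg.eq_goal hg']

lemma not (hg : GoalFn f g Q) : GoalFn (fun x => !(f x)) g Q :=
  ⟨hg.1, hg.2.1, fun b => (hg.2.2 b).trans (isCert_not_iff f b).symm⟩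

end GoalFn

/-- a goal function determines its Boolean function up to complementation. -/
theorem stmt0 {n : ℕ} (f : (Fin n → Bool) → Bool) (g : (Fin n → Option Bool) → ℕ) (Q : ℕ)
    (hg : GoalFn f g Q) (f' : (Fin n → Bool) → Bool) :
    (∃ Q', GoalFn f' g Q') ↔ (f' = f ∨ f' = fun x => !(f x)) := by
  constructor
  · rintro ⟨Q', hg'⟩
    exact eq_or_eq_not_of_isCert_iff (hg.isCert_iff hg')
  · rintro (rfl | rfl)
    · exact ⟨Q, hg⟩
    · exact ⟨Q, hg.not⟩
end

section
/- Let f be a Boolean function, ℓ∈{0,1}, and g a goal function for f. If there is a minimal certificate of f setting x_i = ℓ, then g(x_i=ℓ) − g(*,...,*) ≥ 1, where g(x_i=ℓ) denotes the value of g on the partial assignment setting only x_i to ℓ. -/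
attribute [local instance] Classical.propDecidable

/-! Erasing the coordinate `i` from a minimal certificate `c` with `c i = some ℓ` yields a
non-certificate `c'`, so `g c' < Q = g c`. Submodularity, applied to `∗ ⊑ c'` and the
coordinate `i`, bounds the gain `g c - g c'` by the gain `g(x_i = ℓ) - g(∗)`. -/

theorem extends_none {n : ℕ} (b : Fin n → Option Bool) : Extends b (fun _ => none) :=
  fun _ _ h => by simp at h

theorem extends_update_none {n : ℕ} (b : Fin n → Option Bool) (i : Fin n) :
    Extends b (Function.update b i none) := by
  intro j v hv
  by_cases hj : j = i
  · subst hj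
    simp at hv
  · rwa [Function.update_of_ne hj] at hv

theorem update_none_ne_self {n : ℕ} {b : Fin n → Option Bool} {i : Fin n} {ℓ : Bool}
    (hi : b i = some ℓ) : Function.update b i none ≠ b := fun h => by
  simpa [hi] using congrFun h i

theorem MinCert.not_isCert_update_none {n : ℕ} {f : (Fin n → Bool) → Bool}
    {c : Fin n → Option Bool} (hc : MinCert f c) {i : Fin n} {ℓ : Bool} (hi : c i = some ℓ) :
    ¬ IsCert f (Function.update c i none) :=
  hc.2 _ (extends_update_none c i) (update_none_ne_self hi)

theorem GoalFn.lt_of_extends_of_not_isCert {n : ℕ} {f : (Fin n → Bool) → Bool}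
    {g : (Fin n → Option Bool) → ℕ} {Q : ℕ} (hg : GoalFn f g Q) {b c : Fin n → Option Bool}
    (hcb : Extends c b) (hc : IsCert f c) (hb : ¬ IsCert f b) : g b < g c := by
  have hgc : g c = Q := (hg.2.2 c).mpr hc
  have hgb : g b ≠ Q := fun h => hb ((hg.2.2 b).mp h)
  have := hg.1 b c hcb
  omega

theorem update_none_eq_ite {n : ℕ} (i : Fin n) (ℓ : Bool) :
    Function.update (fun _ : Fin n => none) i (some ℓ) =
      fun j => if j = i then some ℓ else none := by
  funext j
  simp [Function.update_apply]

/-- if some minimal certificate of `f` sets `x i = ℓ`, then any goal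
function for `f` satisfies `g(x i = ℓ) − g(*,…,*) ≥ 1`. -/
theorem stmt2 {n : ℕ} (f : (Fin n → Bool) → Bool) (g : (Fin n → Option Bool) → ℕ) (Q : ℕ)
    (hg : GoalFn f g Q) (i : Fin n) (ℓ : Bool) (c : Fin n → Option Bool)
    (hc : MinCert f c) (hi : c i = some ℓ) :
    g (fun _ => none) + 1 ≤ g (fun j => if j = i then some ℓ else none) := by
  set c' := Function.update c i none
  have hrestore : Function.update c' i (some ℓ) = c := by
    rw [Function.update_idem, ← hi, Function.update_eq_self]
  have hsubmod := hg.2.1 (fun _ => none) c' i ℓ (extends_none c') rfl (by simp [c'])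
  rw [hrestore, update_none_eq_ite] at hsubmod
  have hgap : g c' < g c :=
    hg.lt_of_extends_of_not_isCert (extends_update_none c i) hc.1
      (hc.not_isCert_update_none hi)
  omega
end

section
/- Let f(x_1,...,x_n) be a Boolean function depending on all n of its variables, with n ≥ 1. Then there exists a variable x_i and a value ℓ∈{0,1} such that the function induced from f by fixing x_i = ℓ depends on all remaining n−1 variables. -/
/-! Fix the variable and value `(i, ℓ)` for which the induced function `f_{i←ℓ}` depends on the
most variables. If `f_{i←ℓ}` ignored some `j ≠ i`, take an input `x` on which flipping `x_i`
changes `f` and fix `x_j ← x j` instead: `f_{j←x j}` depends on `x_i`, and still on every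
variable `f_{i←ℓ}` depends on, contradicting maximality. -/

attribute [local instance] Classical.propDecidable

open Finset Function

variable {n : ℕ}

def fixVar (f : (Fin n → Bool) → Bool) (i : Fin n) (ℓ : Bool) : (Fin n → Bool) → Bool :=
  fun x => f (update x i ℓ)

noncomputable def relevantVars (f : (Fin n → Bool) → Bool) : Finset (Fin n) :=
  univ.filter (DependsOnVar f)

theorem apply_update_of_not_dependsOnVar {g : (Fin n → Bool) → Bool} {j : Fin n}
    (hj : ¬ DependsOnVar g j) (x : Fin n → Bool) (b : Bool) : g (update x j b) = g x := by
  have hconst : ∀ c, g (update x j c) = g (update x j false) := by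
    rintro (_ | _)
    · rfl
    · by_contra h
      exact hj ⟨x, h⟩
  rw [hconst, ← hconst (x j), update_eq_self]

theorem not_dependsOnVar_fixVar_self (f : (Fin n → Bool) → Bool) (i : Fin n) (ℓ : Bool) :
    ¬ DependsOnVar (fixVar f i ℓ) i := by
  rintro ⟨x, hx⟩
  simp [fixVar] at hx

theorem DependsOnVar.fixVar_of_not_dependsOnVar {f : (Fin n → Bool) → Bool} {i j k : Fin n}
    {ℓ : Bool} (hk : DependsOnVar (fixVar f i ℓ) k) (hj : ¬ DependsOnVar (fixVar f i ℓ) j)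
    (hji : j ≠ i) (b : Bool) : DependsOnVar (fixVar f j b) k := by
  obtain ⟨x, hx⟩ := hk
  have hki : k ≠ i := by
    rintro rfl
    exact not_dependsOnVar_fixVar_self f k ℓ ⟨x, hx⟩
  refine ⟨update x i ℓ, fun h => hx ?_⟩
  have hfix_eq : ∀ c, fixVar f j b (update (update x i ℓ) k c) = fixVar f i ℓ (update x k c) := by
    intro c
    rw [← apply_update_of_not_dependsOnVar hj (update x k c) b]
    simp only [fixVar, update_comm hki, update_comm hji]
  rwa [hfix_eq, hfix_eq] at h

theorem dependsOnVar_fixVar_apply {f : (Fin n → Bool) → Bool} {i j : Fin n} {x : Fin n → Bool}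
    (hx : f (update x i true) ≠ f (update x i false)) (hji : j ≠ i) :
    DependsOnVar (fixVar f j (x j)) i := by
  refine ⟨x, ?_⟩
  simpa only [fixVar, update_comm hji.symm, update_eq_self] using hx

theorem relevantVars_fixVar_ssubset {f : (Fin n → Bool) → Bool} {i j : Fin n} {ℓ : Bool}
    (hi : DependsOnVar f i) (hj : ¬ DependsOnVar (fixVar f i ℓ) j) (hji : j ≠ i) :
    ∃ b, relevantVars (fixVar f i ℓ) ⊂ relevantVars (fixVar f j b) := by
  obtain ⟨x, hx⟩ := hi
  refine ⟨x j, (ssubset_iff_of_subset fun k hk => ?_).2 ⟨i, ?_, ?_⟩⟩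
  · simp only [relevantVars, mem_filter, mem_univ, true_and] at hk ⊢
    exact hk.fixVar_of_not_dependsOnVar hj hji (x j)
  · simpa [relevantVars] using dependsOnVar_fixVar_apply hx hji
  · simpa [relevantVars] using not_dependsOnVar_fixVar_self f i ℓ

/-- if `f` depends on all `n ≥ 1` of its variables, then some variable can be
fixed to some value so that the induced function depends on all remaining variables. -/
theorem stmt4 {n : ℕ} (hn : 1 ≤ n) (f : (Fin n → Bool) → Bool)
    (hdep : ∀ i, DependsOnVar f i) :
    ∃ (i : Fin n) (ℓ : Bool), ∀ j, j ≠ i →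
      DependsOnVar (fun x => f (Function.update x i ℓ)) j := by
  have : Nonempty (Fin n × Bool) := ⟨(⟨0, hn⟩, true)⟩
  obtain ⟨⟨i, ℓ⟩, hmax⟩ :=
    Finite.exists_max fun p : Fin n × Bool => #(relevantVars (fixVar f p.1 p.2))
  refine ⟨i, ℓ, fun j hji => ?_⟩
  by_contra hj
  obtain ⟨b, hlt⟩ := relevantVars_fixVar_ssubset (hdep i) hj hji
  exact (card_lt_card hlt).not_ge (hmax (j, b))
end

section
/- The n-variable AND function has goal value exactly n, i.e., Γ(AND_n) = n. -/
attribute [local instance] Classical.propDecidable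

/-!
Lower bound: fix a goal function `g` with goal value `Q` and a total assignment `x`, and reveal
the coordinates of `x` one at a time. By submodularity, revealing `i` gains at least as much as
completing `x` with `i` erased to `x` itself, and that gain is at least `1` whenever `x` with `i`
erased is not a certificate. Hence `Q` is at least the sensitivity of `f` at `x`, which is `n`
for `AND_n` at the all-ones input. Upper bound: the goal function that is `n` on partial
assignments containing a `0` and counts the `1`s otherwise.
-/

open Finset

lemma extends_update_of_eq_none {n : ℕ} {b : Fin n → Option Bool} {i : Fin n} (hi : b i = none)
    {v : Option Bool} : Extends (Function.update b i v) b := by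
  intro j w hj
  have hji : j ≠ i := by rintro rfl; simp [hi] at hj
  rwa [Function.update_of_ne hji]

section restrictTo

variable {n : ℕ}

def restrictTo (x : Fin n → Bool) (S : Finset (Fin n)) : Fin n → Option Bool :=
  fun i => if i ∈ S then some (x i) else none

lemma restrictTo_eq_none {x : Fin n → Bool} {S : Finset (Fin n)} {i : Fin n} :
    restrictTo x S i = none ↔ i ∉ S := by
  simp [restrictTo]

lemma extends_restrictTo_of_subset (x : Fin n → Bool) {S T : Finset (Fin n)} (h : S ⊆ T) :
    Extends (restrictTo x T) (restrictTo x S) := by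
  intro i v hi
  simp only [restrictTo] at hi ⊢
  split_ifs at hi with hS
  rw [if_pos (h hS), hi]

lemma update_restrictTo (x : Fin n → Bool) (S : Finset (Fin n)) (i : Fin n) :
    Function.update (restrictTo x S) i (some (x i)) = restrictTo x (insert i S) := by
  funext j
  by_cases hj : j = i
  · subst hj; simp [restrictTo]
  · simp [restrictTo, hj]

lemma extends_restrictTo_univ_getD (b : Fin n → Option Bool) :
    Extends (restrictTo (fun i => (b i).getD false) univ) b := by
  intro i v hi
  simp [restrictTo, hi]

lemma isCert_restrictTo_univ (f : (Fin n → Bool) → Bool) (x : Fin n → Bool) :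
    IsCert f (restrictTo x univ) := by
  have hx : ∀ y, TExtends y (restrictTo x univ) → y = x :=
    fun y hy => funext fun i => hy i (x i) (by simp [restrictTo])
  intro y z hy hz
  rw [hx y hy, hx z hz]

end restrictTo

/-- Erasing `x i` leaves no certificate exactly when flipping `x i` changes `f`, so these are the
sensitive coordinates of `f` at `x`. -/
noncomputable def sensitiveSet {n : ℕ} (f : (Fin n → Bool) → Bool) (x : Fin n → Bool) :
    Finset (Fin n) :=
  univ.filter fun i => ¬ IsCert f (restrictTo x (univ.erase i))

namespace GoalFn

variable {n : ℕ} {f : (Fin n → Bool) → Bool} {g : (Fin n → Option Bool) → ℕ} {Q : ℕ}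

lemma apply_restrictTo_univ (hg : GoalFn f g Q) (x : Fin n → Bool) :
    g (restrictTo x univ) = Q :=
  (hg.2.2 _).2 (isCert_restrictTo_univ f x)

lemma apply_le (hg : GoalFn f g Q) (b : Fin n → Option Bool) : g b ≤ Q :=
  hg.apply_restrictTo_univ _ ▸ hg.1 _ _ (extends_restrictTo_univ_getD b)

lemma lt_of_not_isCert (hg : GoalFn f g Q) {b : Fin n → Option Bool} (hb : ¬ IsCert f b) :
    g b < Q :=
  (hg.apply_le b).lt_of_ne fun h => hb ((hg.2.2 b).1 h)

lemma add_one_le_restrictTo_insert (hg : GoalFn f g Q) (x : Fin n → Bool)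
    {S : Finset (Fin n)} {i : Fin n} (hi : i ∉ S) (hsens : i ∈ sensitiveSet f x) :
    g (restrictTo x S) + 1 ≤ g (restrictTo x (insert i S)) := by
  have hsub := hg.2.1 (restrictTo x S) (restrictTo x (univ.erase i)) i (x i)
    (extends_restrictTo_of_subset x fun j hj => mem_erase.2 ⟨fun h => hi (h ▸ hj), mem_univ j⟩)
    (restrictTo_eq_none.2 hi) (restrictTo_eq_none.2 (notMem_erase i univ))
  rw [update_restrictTo, update_restrictTo, insert_erase (mem_univ i),
    hg.apply_restrictTo_univ] at hsub
  have hlt := hg.lt_of_not_isCert (mem_filter.1 hsens).2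
  omega

lemma card_inter_sensitiveSet_le (hg : GoalFn f g Q) (x : Fin n → Bool) (S : Finset (Fin n)) :
    #(S ∩ sensitiveSet f x) ≤ g (restrictTo x S) := by
  induction S using Finset.induction_on with
  | empty => simp
  | insert i S hi ih =>
    by_cases hsens : i ∈ sensitiveSet f x
    · rw [insert_inter_of_mem hsens, card_insert_of_notMem fun h => hi (mem_inter.1 h).1]
      exact (Nat.succ_le_succ ih).trans (hg.add_one_le_restrictTo_insert x hi hsens)
    · rw [insert_inter_of_notMem hsens]
      exact ih.trans (hg.1 _ _ (extends_restrictTo_of_subset x (subset_insert i S)))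

lemma card_sensitiveSet_le (hg : GoalFn f g Q) (x : Fin n → Bool) :
    #(sensitiveSet f x) ≤ Q := by
  simpa [hg.apply_restrictTo_univ x] using hg.card_inter_sensitiveSet_le x univ

end GoalFn

lemma gamma_eq_of_goalFn {n : ℕ} {f : (Fin n → Bool) → Bool} {g : (Fin n → Option Bool) → ℕ}
    {Q : ℕ} (hg : GoalFn f g Q) (hmin : ∀ g' Q', GoalFn f g' Q' → Q ≤ Q') : gamma f = Q :=
  le_antisymm (Nat.sInf_le ⟨g, hg⟩) (le_csInf ⟨Q, g, hg⟩ fun _ ⟨g', hg'⟩ => hmin g' _ hg')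

section andFun

variable {n : ℕ}

def andFun (n : ℕ) : (Fin n → Bool) → Bool := fun x => decide (∀ i, x i = true)

lemma isCert_andFun_iff {b : Fin n → Option Bool} :
    IsCert (andFun n) b ↔ (∃ i, b i = some false) ∨ ∀ i, b i = some true := by
  constructor
  · intro hb
    by_contra! h
    obtain ⟨hfalse, j, hj⟩ := h
    have hval : ∀ i v, b i = some v → v = true ∧ i ≠ j := by
      intro i v hi
      cases v
      · exact absurd hi (hfalse i)
      · exact ⟨rfl, fun hij => hj (hij ▸ hi)⟩
    have hone := hb (fun _ => true) (Function.update (fun _ => true) j false)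
      (fun i v hi => (hval i v hi).1.symm)
      (fun i v hi => by simp [Function.update_of_ne (hval i v hi).2, (hval i v hi).1])
    have hall : ∀ i, Function.update (fun _ => true) j false i = true := by
      simpa [andFun] using hone
    simpa using hall j
  · rintro (⟨i, hi⟩ | hall) x y hx hy
    · have hxi : x i = false := hx i false hi
      have hyi : y i = false := hy i false hi
      simp only [andFun, decide_eq_decide]
      exact ⟨fun h => absurd (h i) (by simp [hxi]), fun h => absurd (h i) (by simp [hyi])⟩
    · simp [andFun, fun i => hx i true (hall i), fun i => hy i true (hall i)]

lemma sensitiveSet_andFun_true : sensitiveSet (andFun n) (fun _ => true) = univ := by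
  ext i
  simp [sensitiveSet, isCert_andFun_iff, restrictTo]

noncomputable def andGoal (n : ℕ) (b : Fin n → Option Bool) : ℕ :=
  if ∃ i, b i = some false then n else #(univ.filter fun i => b i = some true)

lemma card_filter_some_true_le (b : Fin n → Option Bool) :
    #(univ.filter fun i => b i = some true) ≤ n :=
  (card_filter_le _ _).trans (card_fin n).le

lemma andGoal_le (b : Fin n → Option Bool) : andGoal n b ≤ n := by
  unfold andGoal
  split_ifs
  exacts [le_rfl, card_filter_some_true_le b]

lemma andGoal_of_exists_false {b : Fin n → Option Bool} (h : ∃ i, b i = some false) :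
    andGoal n b = n :=
  if_pos h

lemma andGoal_update_false (b : Fin n → Option Bool) (i : Fin n) :
    andGoal n (Function.update b i (some false)) = n :=
  andGoal_of_exists_false ⟨i, by simp⟩

lemma andGoal_eq_iff {b : Fin n → Option Bool} :
    andGoal n b = n ↔ (∃ i, b i = some false) ∨ ∀ i, b i = some true := by
  unfold andGoal
  split_ifs with hfalse
  · simp [hfalse]
  · simpa [hfalse] using card_filter_eq_iff (s := univ) (p := fun i => b i = some true)

lemma andGoal_mono : Mono (andGoal n) := by
  intro b b' h
  unfold andGoal
  by_cases hfalse : ∃ i, b i = some false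
  · obtain ⟨i, hi⟩ := hfalse
    rw [if_pos ⟨i, hi⟩, if_pos ⟨i, h i false hi⟩]
  · rw [if_neg hfalse]
    split_ifs
    · exact card_filter_some_true_le b
    · exact card_le_card fun i hi => by simpa using h i true (by simpa using hi)

lemma andGoal_update_true {b : Fin n → Option Bool} {i : Fin n} (hi : b i = none)
    (hfalse : ¬ ∃ j, b j = some false) :
    andGoal n (Function.update b i (some true)) = andGoal n b + 1 := by
  have hfalse' : ¬ ∃ j, Function.update b i (some true) j = some false := by
    rintro ⟨j, hj⟩
    by_cases hji : j = i
    · subst hji; simp at hj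
    · exact hfalse ⟨j, by simpa [Function.update_of_ne hji] using hj⟩
  have htrue : (univ.filter fun j => Function.update b i (some true) j = some true) =
      insert i (univ.filter fun j => b j = some true) := by
    ext j
    by_cases hji : j = i
    · subst hji; simp
    · simp [hji]
  unfold andGoal
  rw [if_neg hfalse', if_neg hfalse, htrue, card_insert_of_notMem (by simp [hi])]

lemma andGoal_submod : Submod (andGoal n) := by
  intro b b' i ℓ hext hi hi'
  have hgain : andGoal n b ≤ andGoal n (Function.update b i (some ℓ)) :=
    andGoal_mono _ _ (extends_update_of_eq_none hi)
  cases ℓ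
  · rw [andGoal_update_false, andGoal_update_false]
    have := andGoal_mono b b' hext
    omega
  · by_cases hfalse' : ∃ j, b' j = some false
    · have := andGoal_le (Function.update b' i (some true))
      rw [andGoal_of_exists_false hfalse']
      omega
    · have hfalse : ¬ ∃ j, b j = some false := fun ⟨j, hj⟩ => hfalse' ⟨j, hext j false hj⟩
      rw [andGoal_update_true hi hfalse, andGoal_update_true hi' hfalse']
      omega

lemma goalFn_andGoal (n : ℕ) : GoalFn (andFun n) (andGoal n) n :=
  ⟨andGoal_mono, andGoal_submod, fun _ => andGoal_eq_iff.trans isCert_andFun_iff.symm⟩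

end andFun

/-- the `n`-variable AND function has goal value exactly `n`. -/
theorem stmt7 (n : ℕ) :
    gamma (fun x : Fin n → Bool => decide (∀ i, x i = true)) = n :=
  show gamma (andFun n) = n from gamma_eq_of_goalFn (goalFn_andGoal n) fun _ _ hg => by
    simpa [sensitiveSet_andFun_true] using hg.card_sensitiveSet_le fun _ => true
end

section
/- Let f be the k-of-n threshold function with 1 ≤ k ≤ n. Then Γ(f) = k(n−k+1). -/
attribute [local instance] Classical.propDecidable

/-!
A partial assignment is a certificate of the `k`-of-`n` function iff it fixes at least `k` ones or
at least `n - k + 1` zeros. For the upper bound, `k (n - k + 1) - (k - #ones) (n - k + 1 - #zeros)`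
is a goal function: its marginal gains are antitone in the numbers of fixed ones and zeros.

For the lower bound, submodularity passes the positive jump of `g` at a non-certificate that one
more value completes down to all smaller assignments. With `k - 1` ones fixed, each of the
`n - k + 1` zeros therefore raises `g` by at least one, so `g ≤ Q - (n - k + 1)` at `k - 1` ones;
comparing with these, each of the first `k` ones gains at least `n - k + 1`, whence
`Q ≥ k (n - k + 1)`.
-/

open Finset Function

section PartialAssignment

variable {n : ℕ}

def countVal (ℓ : Bool) (b : Fin n → Option Bool) : ℕ :=
  #{i | b i = some ℓ}

lemma countVal_le_of_extends {ℓ : Bool} {b b' : Fin n → Option Bool} (h : Extends b' b) :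
    countVal ℓ b ≤ countVal ℓ b' :=
  card_le_card fun i hi => by
    simp only [mem_filter, mem_univ, true_and] at hi ⊢
    exact h i ℓ hi

lemma countVal_le_card_of_tExtends {ℓ : Bool} {x : Fin n → Bool} {b : Fin n → Option Bool}
    (h : TExtends x b) : countVal ℓ b ≤ #{i | x i = ℓ} :=
  card_le_card fun i hi => by
    simp only [mem_filter, mem_univ, true_and] at hi ⊢
    exact h i ℓ hi

lemma countVal_update_self {ℓ : Bool} {b : Fin n → Option Bool} {i : Fin n} (hi : b i = none) :
    countVal ℓ (update b i (some ℓ)) = countVal ℓ b + 1 := by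
  have : filter (fun j => update b i (some ℓ) j = some ℓ) univ
      = insert i (filter (fun j => b j = some ℓ) univ) := by
    ext j
    by_cases hj : j = i <;> simp [hj]
  rw [countVal, this, card_insert_of_notMem (by simp [hi]), countVal]

lemma countVal_update_of_ne {ℓ ℓ' : Bool} {b : Fin n → Option Bool} {i : Fin n}
    (hi : b i = none) (h : ℓ' ≠ ℓ) :
    countVal ℓ' (update b i (some ℓ)) = countVal ℓ' b := by
  unfold countVal
  congr 1
  ext j
  by_cases hj : j = i <;> simp [hj, hi, h.symm]

lemma tExtends_getD (b : Fin n → Option Bool) (d : Bool) : TExtends (fun i => (b i).getD d) b :=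
  fun i v h => by simp [h]

lemma card_getD_eq_countVal (b : Fin n → Option Bool) (d ℓ : Bool) (h : d ≠ ℓ) :
    #{i | (b i).getD d = ℓ} = countVal ℓ b := by
  unfold countVal
  congr 1
  ext i
  cases hb : b i <;> simp [hb, h]

lemma card_eq_true_add_card_eq_false (x : Fin n → Bool) :
    #{i | x i = true} + #{i | x i = false} = n := by
  simpa using card_filter_add_card_filter_not (s := univ) (fun i => x i = true)

lemma extends_update_self {b : Fin n → Option Bool} {i : Fin n} (hi : b i = none) (v : Bool) :
    Extends (update b i (some v)) b := by
  intro j w hj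
  rw [update_of_ne]
  · exact hj
  · rintro rfl
    simp [hi] at hj

def ofFinsets (S T : Finset (Fin n)) : Fin n → Option Bool :=
  fun i => if i ∈ S then some true else if i ∈ T then some false else none

variable {S T S' T' : Finset (Fin n)} {i : Fin n}

lemma countVal_true_ofFinsets (S T : Finset (Fin n)) : countVal true (ofFinsets S T) = #S := by
  unfold countVal ofFinsets
  congr 1
  ext j
  simp only [mem_filter, mem_univ, true_and]
  split_ifs <;> simp [*]

lemma countVal_false_ofFinsets (h : Disjoint S T) : countVal false (ofFinsets S T) = #T := by
  unfold countVal ofFinsets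
  congr 1
  ext j
  simp only [mem_filter, mem_univ, true_and]
  split_ifs with hS hT
  · simp [disjoint_left.1 h hS]
  · simp [hT]
  · simp [hT]

lemma ofFinsets_eq_none (hS : i ∉ S) (hT : i ∉ T) : ofFinsets S T i = none := by
  simp [ofFinsets, hS, hT]

lemma update_ofFinsets_true : update (ofFinsets S T) i (some true) = ofFinsets (insert i S) T := by
  ext j : 1
  by_cases hj : j = i <;> simp [ofFinsets, hj]

lemma update_ofFinsets_false (hi : i ∉ S) :
    update (ofFinsets S T) i (some false) = ofFinsets S (insert i T) := by
  ext j : 1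
  by_cases hj : j = i <;> simp [ofFinsets, hj, hi]

lemma extends_ofFinsets (hS : S ⊆ S') (hT : T ⊆ T') (h : Disjoint S' T') :
    Extends (ofFinsets S' T') (ofFinsets S T) := by
  intro j v hj
  simp only [ofFinsets] at hj ⊢
  split_ifs at hj with h1 h2
  · simp_all [hS h1]
  · simp_all [hT h2, disjoint_right.1 h (hT h2)]

end PartialAssignment

section GoalFunction

variable {n : ℕ} {f : (Fin n → Bool) → Bool} {g : (Fin n → Option Bool) → ℕ} {Q : ℕ}

lemma GoalFn.apply_eq_of_isCert (hg : GoalFn f g Q) {b : Fin n → Option Bool} (hb : IsCert f b) :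
    g b = Q :=
  (hg.2.2 b).2 hb

/-- `g` jumps from `b'` up to the certificate value `Q`, and submodularity passes this positive
gain down to `b`. -/
lemma GoalFn.lt_apply_update (hg : GoalFn f g Q) {b b' : Fin n → Option Bool} {i : Fin n}
    {ℓ : Bool} (hext : Extends b' b) (hb : b i = none) (hb' : b' i = none)
    (hnc : ¬ IsCert f b') (hc : IsCert f (update b' i (some ℓ))) :
    g b < g (update b i (some ℓ)) := by
  obtain ⟨hmono, hsub, hiff⟩ := hg
  have hQ : g (update b' i (some ℓ)) = Q := (hiff _).2 hc
  have hlt : g b' < Q :=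
    lt_of_le_of_ne (hQ ▸ hmono _ _ (extends_update_self hb' ℓ)) fun h => hnc ((hiff _).1 h)
  have := hsub b b' i ℓ hext hb hb'
  omega

end GoalFunction

section ProductGoal

variable {n : ℕ} (K L : ℕ)

def deficit (b : Fin n → Option Bool) : ℕ :=
  (K - countVal true b) * (L - countVal false b)

def productGoal (b : Fin n → Option Bool) : ℕ :=
  K * L - deficit K L b

lemma deficit_le (b : Fin n → Option Bool) : deficit K L b ≤ K * L :=
  Nat.mul_le_mul (Nat.sub_le _ _) (Nat.sub_le _ _)

lemma productGoal_eq_iff (b : Fin n → Option Bool) :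
    productGoal K L b = K * L ↔ K ≤ countVal true b ∨ L ≤ countVal false b := by
  have := deficit_le K L b
  rw [productGoal, ← Nat.sub_eq_zero_iff_le, ← Nat.sub_eq_zero_iff_le, ← Nat.mul_eq_zero]
  exact ⟨fun h => by unfold deficit at *; omega, fun h => by unfold deficit at *; omega⟩

lemma mono_productGoal : Mono (productGoal (n := n) K L) := by
  intro b b' h
  have : deficit K L b' ≤ deficit K L b :=
    Nat.mul_le_mul (Nat.sub_le_sub_left (countVal_le_of_extends h) _)
      (Nat.sub_le_sub_left (countVal_le_of_extends h) _)
  unfold productGoal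
  omega

/-- The decrease `(K - a) * (L - c) - (K - (a + 1)) * (L - c)` is antitone in `(a, c)`. -/
lemma tsub_mul_tsub_add_le {a a' c c' : ℕ} (ha : a ≤ a') (hc : c ≤ c') :
    (K - (a + 1)) * (L - c) + (K - a') * (L - c')
      ≤ (K - (a' + 1)) * (L - c') + (K - a) * (L - c) := by
  rcases le_or_gt K a' with h | h
  · rw [Nat.sub_eq_zero_of_le h, Nat.sub_eq_zero_of_le (by omega : K ≤ a' + 1)]
    simpa using Nat.mul_le_mul_right (L - c) (by omega : K - (a + 1) ≤ K - a)
  · rw [show K - a = K - (a + 1) + 1 by omega, show K - a' = K - (a' + 1) + 1 by omega]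
    nlinarith [(by omega : L - c' ≤ L - c), (by omega : K - (a' + 1) ≤ K - (a + 1))]

lemma deficit_update_add_le {b b' : Fin n → Option Bool} {i : Fin n} (ℓ : Bool)
    (hext : Extends b' b) (hb : b i = none) (hb' : b' i = none) :
    deficit K L (update b i (some ℓ)) + deficit K L b'
      ≤ deficit K L (update b' i (some ℓ)) + deficit K L b := by
  have ho := countVal_le_of_extends (ℓ := true) hext
  have hz := countVal_le_of_extends (ℓ := false) hext
  cases ℓ
  · have key := tsub_mul_tsub_add_le L K hz ho
    simp only [deficit, countVal_update_self hb, countVal_update_self hb',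
      countVal_update_of_ne (ℓ' := true) (ℓ := false) hb (by decide),
      countVal_update_of_ne (ℓ' := true) (ℓ := false) hb' (by decide)]
    simpa only [mul_comm] using key
  · have key := tsub_mul_tsub_add_le K L ho hz
    simpa only [deficit, countVal_update_self hb, countVal_update_self hb',
      countVal_update_of_ne (ℓ' := false) (ℓ := true) hb (by decide),
      countVal_update_of_ne (ℓ' := false) (ℓ := true) hb' (by decide)] using key

lemma submod_productGoal : Submod (productGoal (n := n) K L) := by
  intro b b' i ℓ hext hb hb'
  have := deficit_update_add_le K L ℓ hext hb hb'
  have := deficit_le K L (update b i (some ℓ))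
  have := deficit_le K L (update b' i (some ℓ))
  have := deficit_le K L b
  have := deficit_le K L b'
  unfold productGoal
  omega

end ProductGoal

section Threshold

variable {n k : ℕ}

def threshold (n k : ℕ) (x : Fin n → Bool) : Bool :=
  decide (k ≤ #{i | x i = true})

lemma IsKCert.isCert {f : (Fin n → Bool) → Bool} {v : Bool} {b : Fin n → Option Bool}
    (h : IsKCert f v b) : IsCert f b :=
  fun x y hx hy => (h x hx).trans (h y hy).symm

lemma isKCert_threshold_true {b : Fin n → Option Bool} (h : k ≤ countVal true b) :
    IsKCert (threshold n k) true b := fun x hx => by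
  simpa [threshold] using h.trans (countVal_le_card_of_tExtends hx)

lemma isKCert_threshold_false {b : Fin n → Option Bool} (h : n - k + 1 ≤ countVal false b) :
    IsKCert (threshold n k) false b := fun x hx => by
  have := countVal_le_card_of_tExtends (ℓ := false) hx
  have := card_eq_true_add_card_eq_false x
  simp only [threshold, decide_eq_false_iff_not]
  omega

theorem isCert_threshold_iff (hkn : k ≤ n) (b : Fin n → Option Bool) :
    IsCert (threshold n k) b ↔ k ≤ countVal true b ∨ n - k + 1 ≤ countVal false b := by
  refine ⟨fun hb => ?_, ?_⟩
  · by_contra! h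
    have hx : threshold n k (fun i => (b i).getD true) = true := by
      have := card_eq_true_add_card_eq_false (fun i => (b i).getD true)
      rw [card_getD_eq_countVal b true false (by decide)] at this
      simp only [threshold, decide_eq_true_eq]
      omega
    have hy : threshold n k (fun i => (b i).getD false) = false := by
      simp only [threshold, decide_eq_false_iff_not, card_getD_eq_countVal b false true (by decide)]
      omega
    have := hb _ _ (tExtends_getD b true) (tExtends_getD b false)
    simp_all
  · rintro (h | h)
    · exact (isKCert_threshold_true h).isCert
    · exact (isKCert_threshold_false h).isCert

theorem goalFn_threshold (hkn : k ≤ n) :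
    GoalFn (threshold n k) (productGoal k (n - k + 1)) (k * (n - k + 1)) :=
  ⟨mono_productGoal _ _, submod_productGoal _ _, fun b => by
    rw [productGoal_eq_iff, isCert_threshold_iff hkn]⟩

variable {g : (Fin n → Option Bool) → ℕ} {Q : ℕ}

/-- With `k - 1` ones fixed, each further zero strictly increases `g`, since filling every other
free coordinate with zeros leaves a non-certificate that one more zero completes. -/
lemma GoalFn.add_le_of_card_add_one_eq (hg : GoalFn (threshold n k) g Q) (hkn : k ≤ n)
    {S T : Finset (Fin n)} (hST : Disjoint S T) (hS : #S + 1 = k) :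
    g (ofFinsets S T) + (n - #S - #T) ≤ Q := by
  induction h : n - #S - #T generalizing T with
  | zero =>
    have hcard : #S + #T ≤ n := by simpa [card_union_of_disjoint hST] using card_le_univ (S ∪ T)
    have : g (ofFinsets S T) = Q := hg.apply_eq_of_isCert <| IsKCert.isCert <|
      isKCert_threshold_false (by rw [countVal_false_ofFinsets hST]; omega)
    omega
  | succ m ih =>
    obtain ⟨i, -, hi⟩ := exists_mem_notMem_of_card_lt_card (s := S ∪ T) (t := univ)
      (by rw [card_union_of_disjoint hST, card_univ, Fintype.card_fin]; omega)
    rw [mem_union, not_or] at hi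
    have hdisj : Disjoint S (insert i S)ᶜ := disjoint_compl_right_iff.2 (subset_insert i S)
    have hlt : g (ofFinsets S T) < g (ofFinsets S (insert i T)) := by
      rw [← update_ofFinsets_false hi.1]
      refine hg.lt_apply_update (b' := ofFinsets S (insert i S)ᶜ)
        (extends_ofFinsets subset_rfl
          (subset_compl_iff_disjoint_right.2 (disjoint_insert_right.2 ⟨hi.2, hST.symm⟩)) hdisj)
        (ofFinsets_eq_none hi.1 hi.2) (ofFinsets_eq_none hi.1 (by simp)) ?_ ?_
      · rw [isCert_threshold_iff hkn, countVal_true_ofFinsets, countVal_false_ofFinsets hdisj,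
          card_compl, card_insert_of_notMem hi.1, Fintype.card_fin]
        omega
      · refine IsKCert.isCert (isKCert_threshold_false ?_)
        rw [update_ofFinsets_false hi.1,
          countVal_false_ofFinsets (disjoint_insert_right.2 ⟨hi.1, hdisj⟩),
          card_insert_of_notMem (by simp), card_compl, card_insert_of_notMem hi.1,
          Fintype.card_fin]
        omega
    have := ih (disjoint_insert_right.2 ⟨hi.1, hST⟩) (by rw [card_insert_of_notMem hi.2]; omega)
    omega

/-- Adding a one to `S` gains at least `n - k + 1`: compare, by submodularity, with adding it to
a superset of `S` holding `k - 1` ones, which the previous lemma bounds. -/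
lemma GoalFn.card_mul_le (hg : GoalFn (threshold n k) g Q) (hkn : k ≤ n) {S : Finset (Fin n)}
    (hS : #S ≤ k) : #S * (n - k + 1) ≤ g (ofFinsets S ∅) := by
  induction S using Finset.induction_on with
  | empty => simp
  | insert i S hi ih =>
    rw [card_insert_of_notMem hi] at hS ⊢
    obtain ⟨S', hSS', hS'i, hS'⟩ := exists_subsuperset_card_eq (n := k - 1)
      (subset_erase.2 ⟨subset_univ S, hi⟩) (by omega)
      (by rw [card_erase_of_mem (mem_univ i), card_univ, Fintype.card_fin]; omega)
    have hiS' : i ∉ S' := fun h => (mem_erase.1 (hS'i h)).1 rfl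
    have hfull : g (ofFinsets (insert i S') ∅) = Q :=
      hg.apply_eq_of_isCert <| IsKCert.isCert <| isKCert_threshold_true <| by
        rw [countVal_true_ofFinsets, card_insert_of_notMem hiS']
        omega
    have hsub := hg.2.1 (ofFinsets S ∅) (ofFinsets S' ∅) i true
      (extends_ofFinsets hSS' subset_rfl (disjoint_empty_right _))
      (ofFinsets_eq_none hi (notMem_empty i)) (ofFinsets_eq_none hiS' (notMem_empty i))
    rw [update_ofFinsets_true, update_ofFinsets_true, hfull] at hsub
    have hS'bound := hg.add_le_of_card_add_one_eq hkn (disjoint_empty_right S') (by omega)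
    rw [card_empty] at hS'bound
    have := ih (by omega)
    rw [add_mul, one_mul]
    omega

theorem GoalFn.le_of_threshold (hg : GoalFn (threshold n k) g Q) (hkn : k ≤ n) :
    k * (n - k + 1) ≤ Q := by
  obtain ⟨S, -, hS⟩ := exists_subset_card_eq (s := (univ : Finset (Fin n))) (n := k)
    (by rwa [card_univ, Fintype.card_fin])
  have hfull : g (ofFinsets S ∅) = Q := hg.apply_eq_of_isCert <| IsKCert.isCert <|
    isKCert_threshold_true (countVal_true_ofFinsets S ∅ ▸ hS.ge)
  simpa [hS, hfull] using hg.card_mul_le hkn hS.le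

theorem gamma_threshold (hkn : k ≤ n) : gamma (threshold n k) = k * (n - k + 1) :=
  le_antisymm (Nat.sInf_le ⟨_, goalFn_threshold hkn⟩)
    (le_csInf ⟨_, _, goalFn_threshold hkn⟩ fun _ ⟨_, hg⟩ => hg.le_of_threshold hkn)

end Threshold

theorem stmt10_general (n k : ℕ) (hkn : k ≤ n) :
    gamma (fun x : Fin n → Bool =>
        decide (k ≤ (Finset.univ.filter (fun i => x i = true)).card)) = k * (n - k + 1) :=
  gamma_threshold hkn

/-- for the `k`-of-`n` threshold function, `Γ(f) = k(n − k + 1)`. -/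
theorem stmt10 (n k : ℕ) (hk1 : 1 ≤ k) (hkn : k ≤ n) :
    gamma (fun x : Fin n → Bool =>
        decide (k ≤ (Finset.univ.filter (fun i => x i = true)).card)) = k * (n - k + 1) :=
  stmt10_general n k hkn
end

section
/- For any Boolean function f on n variables, Γ(f) ≤ 2^n − 1, witnessed by the function g(b) = 2^n − 1 if b contains a certificate of f, and g(b) = Σ_{i=1}^{w(b)} 2^{n−i} otherwise, where w(b) is the number of non-* coordinates of b; this g is monotone and submodular. -/
attribute [local instance] Classical.propDecidable

/-- `f` depends on its `i`-th variable. -/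
def BoolDependsOn {n : ℕ} (f : (Fin n → Bool) → Bool) (i : Fin n) : Prop :=
  ∃ x, f (Function.update x i true) ≠ f (Function.update x i false)

/-!
Let `r b = certRank f b` be `n` if `b` contains a certificate of `f` and the weight of `b`
otherwise, and put `e b = n - r b`. Summing the geometric series, `g b = 2^n - 2^(e b)`. Filling in a `*` of a
non-certificate strictly lowers `e`, so if `b ⊊ b'` and `b` is not a certificate, both
`2^(e (b + i))` and `2^(e b')` are at most `2^(e b - 1)`; their sum is then at most `2^(e b)`,
which is submodularity. The goal value `2^n - 1` is reached exactly when `e b = 0`.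
-/

open Finset Function

lemma Nat.two_pow_add_two_pow_le {a b c : ℕ} (ha : a < c) (hb : b < c) :
    2 ^ a + 2 ^ b ≤ 2 ^ c := by
  obtain ⟨k, rfl⟩ : ∃ k, c = k + 1 := ⟨c - 1, by omega⟩
  have hak := Nat.pow_le_pow_right (n := 2) two_pos (Nat.lt_succ_iff.mp ha)
  have hbk := Nat.pow_le_pow_right (n := 2) two_pos (Nat.lt_succ_iff.mp hb)
  rw [pow_succ]
  omega

lemma sum_Icc_two_pow_sub_add {n w : ℕ} (hw : w ≤ n) :
    ∑ i ∈ Icc 1 w, 2 ^ (n - i) + 2 ^ (n - w) = 2 ^ n := by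
  induction w with
  | zero => simp
  | succ w ih =>
    have hsplit : 2 ^ (n - w) = 2 ^ (n - (w + 1)) + 2 ^ (n - (w + 1)) := by
      rw [← two_mul, ← pow_succ']
      congr 1
      omega
    rw [sum_Icc_succ_top (by omega), add_assoc, ← hsplit, ih (by omega)]

section PartialAssignment

variable {n : ℕ}

lemma update_extends {b : Fin n → Option Bool} {i : Fin n} (hb : b i = none) (ℓ : Bool) :
    Extends (update b i (some ℓ)) b := by
  intro j v hv
  have hj : j ≠ i := by rintro rfl; simp [hb] at hv
  rwa [update_of_ne hj]

lemma update_ne_self {b : Fin n → Option Bool} {i : Fin n} (hb : b i = none) (ℓ : Bool) :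
    update b i (some ℓ) ≠ b :=
  fun h => by simpa [hb] using congrFun h i

lemma wt_le (b : Fin n → Option Bool) : wt b ≤ n :=
  (card_filter_le _ _).trans (card_fin n).le

lemma filter_isSome_subset {b b' : Fin n → Option Bool} (h : Extends b' b) :
    univ.filter (fun i => (b i).isSome) ⊆ univ.filter (fun i => (b' i).isSome) := by
  intro i hi
  simp only [mem_filter, mem_univ, true_and, Option.isSome_iff_exists] at hi ⊢
  obtain ⟨v, hv⟩ := hi
  exact ⟨v, h i v hv⟩

lemma wt_le_wt {b b' : Fin n → Option Bool} (h : Extends b' b) : wt b ≤ wt b' :=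
  card_le_card (filter_isSome_subset h)

lemma wt_lt_wt {b b' : Fin n → Option Bool} (h : Extends b' b) (hne : b' ≠ b) :
    wt b < wt b' := by
  obtain ⟨i, hi⟩ := Function.ne_iff.mp hne
  have hbi : b i = none := by
    cases hb : b i with
    | none => rfl
    | some v => exact absurd (h i v hb) (hb ▸ hi)
  refine card_lt_card ⟨filter_isSome_subset h, fun hsub => ?_⟩
  have := hsub (by simpa [Option.isSome_iff_ne_none, hbi] using hi)
  simp [hbi] at this

end PartialAssignment

section Certificates

variable {n : ℕ}

lemma IsCert.of_extends {f : (Fin n → Bool) → Bool} {b b' : Fin n → Option Bool}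
    (hc : IsCert f b) (h : Extends b' b) : IsCert f b' :=
  fun x y hx hy => hc x y (fun i v hv => hx i v (h i v hv)) (fun i v hv => hy i v (h i v hv))

variable (f : (Fin n → Bool) → Bool)

/-- Two total extensions of `b` on which `f` differs must differ at a `*` of `b`. -/
lemma wt_lt_of_not_isCert {b : Fin n → Option Bool} (hb : ¬ IsCert f b) : wt b < n := by
  simp only [IsCert, not_forall] at hb
  obtain ⟨x, y, hx, hy, hxy⟩ := hb
  obtain ⟨i, hi⟩ : ∃ i, x i ≠ y i := Function.ne_iff.mp fun h => hxy (congrArg f h)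
  have hbi : b i = none := by
    cases hb : b i with
    | none => rfl
    | some v => exact absurd ((hx i v hb).trans (hy i v hb).symm) hi
  calc wt b < (univ : Finset (Fin n)).card :=
        card_lt_card (filter_ssubset.mpr ⟨i, mem_univ i, by simp [hbi]⟩)
    _ = n := card_fin n

noncomputable def certRank (b : Fin n → Option Bool) : ℕ :=
  if IsCert f b then n else wt b

lemma certRank_le (b : Fin n → Option Bool) : certRank f b ≤ n := by
  unfold certRank
  split_ifs
  exacts [le_rfl, wt_le b]

lemma certRank_eq_iff (b : Fin n → Option Bool) : certRank f b = n ↔ IsCert f b := by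
  unfold certRank
  split_ifs with hb
  · exact iff_of_true rfl hb
  · exact iff_of_false (wt_lt_of_not_isCert f hb).ne hb

lemma certRank_mono {b b' : Fin n → Option Bool} (h : Extends b' b) :
    certRank f b ≤ certRank f b' := by
  by_cases hb : IsCert f b
  · rw [(certRank_eq_iff f b).mpr hb, (certRank_eq_iff f b').mpr (hb.of_extends h)]
  · unfold certRank
    rw [if_neg hb]
    split_ifs
    exacts [wt_le b, wt_le_wt h]

lemma certRank_lt_of_extends {b b' : Fin n → Option Bool} (h : Extends b' b) (hne : b' ≠ b)
    (hb : certRank f b < n) : certRank f b < certRank f b' := by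
  have hnc : ¬ IsCert f b := fun hc => hb.ne ((certRank_eq_iff f b).mpr hc)
  unfold certRank
  rw [if_neg hnc]
  split_ifs
  exacts [wt_lt_of_not_isCert f hnc, wt_lt_wt h hne]

lemma certValue_eq (b : Fin n → Option Bool) :
    (if IsCert f b then 2 ^ n - 1 else ∑ i ∈ Icc 1 (wt b), 2 ^ (n - i)) =
      2 ^ n - 2 ^ (n - certRank f b) := by
  unfold certRank
  split_ifs
  · simp
  · have := sum_Icc_two_pow_sub_add (wt_le b)
    omega

end Certificates

section TwoPowSubRank

variable {n : ℕ} (r : (Fin n → Option Bool) → ℕ)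

lemma mono_two_pow_sub (hmono : ∀ b b', Extends b' b → r b ≤ r b') :
    Mono fun b => 2 ^ n - 2 ^ (n - r b) :=
  fun b b' h => Nat.sub_le_sub_left
    (Nat.pow_le_pow_right two_pos (Nat.sub_le_sub_left (hmono b b' h) n)) _

lemma submod_two_pow_sub (hle : ∀ b, r b ≤ n) (hmono : ∀ b b', Extends b' b → r b ≤ r b')
    (hstrict : ∀ b b', Extends b' b → b' ≠ b → r b < n → r b < r b') :
    Submod fun b => 2 ^ n - 2 ^ (n - r b) := by
  intro b b' i ℓ hext hbi hb'i
  have hpow : ∀ b, 2 ^ (n - r b) ≤ 2 ^ n := fun b => Nat.pow_le_pow_right two_pos (by omega)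
  suffices key : 2 ^ (n - r (update b i (some ℓ))) + 2 ^ (n - r b') ≤
      2 ^ (n - r (update b' i (some ℓ))) + 2 ^ (n - r b) by
    have := hpow b; have := hpow b'
    have := hpow (update b i (some ℓ)); have := hpow (update b' i (some ℓ))
    simp only
    omega
  rcases eq_or_ne b' b with rfl | hne
  · exact le_rfl
  rcases (hle b).lt_or_eq with hlt | heq
  · have hu := hstrict b _ (update_extends hbi ℓ) (update_ne_self hbi ℓ) hlt
    have hb' := hstrict b b' hext hne hlt
    have := hle (update b i (some ℓ)); have := hle b'
    calc _ ≤ 2 ^ (n - r b) := Nat.two_pow_add_two_pow_le (by omega) (by omega)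
      _ ≤ _ := Nat.le_add_left _ _
  · have hb' : r b' = n := le_antisymm (hle b') (heq.ge.trans (hmono b b' hext))
    have hu : r (update b i (some ℓ)) = n :=
      le_antisymm (hle _) (heq.ge.trans (hmono _ _ (update_extends hbi ℓ)))
    have hu' : r (update b' i (some ℓ)) = n :=
      le_antisymm (hle _) (hb'.ge.trans (hmono _ _ (update_extends hb'i ℓ)))
    rw [hb', hu, hu', heq]

end TwoPowSubRank

lemma goalFn_certRank {n : ℕ} (f : (Fin n → Bool) → Bool) :
    GoalFn f (fun b => 2 ^ n - 2 ^ (n - certRank f b)) (2 ^ n - 1) := by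
  refine ⟨mono_two_pow_sub _ fun _ _ => certRank_mono f,
    submod_two_pow_sub _ (certRank_le f) (fun _ _ => certRank_mono f)
      (fun _ _ => certRank_lt_of_extends f), fun b => ?_⟩
  simp only
  rw [← certRank_eq_iff f b]
  have hle := certRank_le f b
  have hpos : 1 ≤ 2 ^ (n - certRank f b) := Nat.one_le_two_pow
  have htop : 2 ^ (n - certRank f b) ≤ 2 ^ n := Nat.pow_le_pow_right two_pos (by omega)
  have hone : 2 ^ (n - certRank f b) = 1 ↔ n - certRank f b = 0 := by
    rw [Nat.pow_eq_one]; simp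
  constructor <;> intro h <;> omega

/-- `Γ(f) ≤ 2^n − 1`, witnessed by the function equal to `2^n − 1` on
partial assignments containing a certificate and to `Σ_{i=1}^{w(b)} 2^{n−i}` otherwise. -/
theorem stmt16 {n : ℕ} (f : (Fin n → Bool) → Bool) :
    GoalFn f
      (fun b => if IsCert f b then 2 ^ n - 1 else ∑ i ∈ Finset.Icc 1 (wt b), 2 ^ (n - i))
      (2 ^ n - 1) ∧
    gamma f ≤ 2 ^ n - 1 := by
  have hg : (fun b => if IsCert f b then 2 ^ n - 1 else ∑ i ∈ Finset.Icc 1 (wt b), 2 ^ (n - i))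
      = fun b => 2 ^ n - 2 ^ (n - certRank f b) := funext (certValue_eq f)
  rw [hg]
  exact ⟨goalFn_certRank f, Nat.sInf_le ⟨_, goalFn_certRank f⟩⟩
end

section
/- If h:2^V→{0,1,...,d} is a monotone submodular set function on a finite set V, then there is a binary decision tree computing h whose rank is at most d. -/
/-- Binary decision trees with natural-number leaf labels, querying elements of `V`. -/
inductive DTree (V : Type*) where
  | leaf : ℕ → DTree V
  | node : V → DTree V → DTree V → DTree V

/-- Evaluate a decision tree on an input set `S`: at a node querying `i`,
branch right if `i ∈ S` and left otherwise. -/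
def DTree.evalT {V : Type*} [DecidableEq V] : DTree V → Finset V → ℕ
  | .leaf v, _ => v
  | .node i l r, S => if i ∈ S then r.evalT S else l.evalT S

/-- The rank of a decision tree. -/
def DTree.rank {V : Type*} : DTree V → ℕ
  | .leaf _ => 0
  | .node _ l r => if l.rank = r.rank then l.rank + 1 else max l.rank r.rank

lemma stmt19_aux {V : Type*} [DecidableEq V] (d : ℕ) :
    ∀ (n : ℕ) (R : Finset V) (g : Finset V → ℕ), R.card = n →
    (∀ S, g S ≤ d) →
    (∀ S T, S ⊆ T → g S ≤ g T) →
    (∀ S T : Finset V, ∀ j, S ⊆ T → j ∉ T →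
      g (insert j T) + g S ≤ g (insert j S) + g T) →
    ∃ t : DTree V, (∀ S, t.evalT S = g (S ∩ R)) ∧ t.rank + g ∅ ≤ d := by
  intro n
  induction n with
  | zero =>
    intro R g hcard hran hmono hsub
    rw [Finset.card_eq_zero] at hcard
    subst hcard
    exact ⟨DTree.leaf (g ∅), fun S => by simp [DTree.evalT], by
      simpa [DTree.rank] using hran ∅⟩
  | succ n ih =>
    intro R g hcard hran hmono hsub
    have hR : R.Nonempty := Finset.card_pos.mp (by omega)
    obtain ⟨j, hj⟩ := hR
    have hcard' : (R.erase j).card = n := by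
      simp [Finset.card_erase_of_mem hj, hcard]
    by_cases hdeg : g {j} = g ∅
    · -- j is irrelevant
      have key : ∀ T : Finset V, g (insert j T) = g T := by
        intro T
        by_cases hjT : j ∈ T
        · rw [Finset.insert_eq_self.mpr hjT]
        · have h1 := hsub ∅ T j (Finset.empty_subset T) hjT
          rw [show insert j (∅ : Finset V) = {j} from rfl, hdeg] at h1
          have h2 := hmono T (insert j T) (Finset.subset_insert j T)
          omega
      obtain ⟨t, ht, hrk⟩ := ih (R.erase j) g hcard' hran hmono hsub
      refine ⟨t, fun S => ?_, hrk⟩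
      rw [ht S]
      by_cases hjS : j ∈ S
      · have : S ∩ R = insert j (S ∩ R.erase j) := by
          ext x
          simp only [Finset.mem_inter, Finset.mem_insert, Finset.mem_erase]
          constructor
          · rintro ⟨hx, hxR⟩
            by_cases hxj : x = j
            · exact Or.inl hxj
            · exact Or.inr ⟨hx, hxj, hxR⟩
          · rintro (rfl | ⟨hx, _, hxR⟩)
            · exact ⟨hjS, hj⟩
            · exact ⟨hx, hxR⟩
        rw [this, key]
      · have : S ∩ R = S ∩ R.erase j := by
          ext x
          simp only [Finset.mem_inter, Finset.mem_erase]
          exact ⟨fun ⟨hx, hxR⟩ => ⟨hx, fun he => hjS (he ▸ hx), hxR⟩,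
            fun ⟨hx, _, hxR⟩ => ⟨hx, hxR⟩⟩
        rw [this]
    · -- j is relevant: g ∅ < g {j}
      have hlt : g ∅ < g {j} :=
        lt_of_le_of_ne (hmono ∅ {j} (Finset.empty_subset _)) (fun e => hdeg e.symm)
      set g1 : Finset V → ℕ := fun S => g (insert j S) with hg1
      have hran1 : ∀ S, g1 S ≤ d := fun S => hran _
      have hmono1 : ∀ S T, S ⊆ T → g1 S ≤ g1 T := fun S T hST =>
        hmono _ _ (Finset.insert_subset_insert j hST)
      have hsub1 : ∀ S T : Finset V, ∀ k, S ⊆ T → k ∉ T →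
          g1 (insert k T) + g1 S ≤ g1 (insert k S) + g1 T := by
        intro S T k hST hkT
        by_cases hkj : k = j
        · subst hkj
          simp only [hg1, Finset.insert_idem]
          omega
        · have h1 := hsub (insert j S) (insert j T) k
            (Finset.insert_subset_insert j hST)
            (by simp [Finset.mem_insert, hkT, hkj])
          simp only [hg1]
          rw [Finset.insert_comm j k T, Finset.insert_comm j k S]
          exact h1
      obtain ⟨t0, ht0, hrk0⟩ := ih (R.erase j) g hcard' hran hmono hsub
      obtain ⟨t1, ht1, hrk1⟩ := ih (R.erase j) g1 hcard' hran1 hmono1 hsub1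
      have hg1e : g1 ∅ = g {j} := by simp [hg1]
      refine ⟨DTree.node j t0 t1, fun S => ?_, ?_⟩
      · simp only [DTree.evalT]
        by_cases hjS : j ∈ S
        · rw [if_pos hjS, ht1 S]
          have : insert j (S ∩ R.erase j) = S ∩ R := by
            ext x
            simp only [Finset.mem_inter, Finset.mem_insert, Finset.mem_erase]
            constructor
            · rintro (rfl | ⟨hx, _, hxR⟩)
              · exact ⟨hjS, hj⟩
              · exact ⟨hx, hxR⟩
            · rintro ⟨hx, hxR⟩
              by_cases hxj : x = j
              · exact Or.inl hxj
              · exact Or.inr ⟨hx, hxj, hxR⟩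
          simp only [hg1]
          rw [this]
        · rw [if_neg hjS, ht0 S]
          have : S ∩ R = S ∩ R.erase j := by
            ext x
            simp only [Finset.mem_inter, Finset.mem_erase]
            exact ⟨fun ⟨hx, hxR⟩ => ⟨hx, fun he => hjS (he ▸ hx), hxR⟩,
              fun ⟨hx, _, hxR⟩ => ⟨hx, hxR⟩⟩
          rw [this]
      · simp only [DTree.rank]
        rw [hg1e] at hrk1
        by_cases heq : t0.rank = t1.rank
        · rw [if_pos heq]
          omega
        · rw [if_neg heq]
          have : max t0.rank t1.rank = t0.rank ∨ max t0.rank t1.rank = t1.rank :=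
            max_choice _ _
          omega

/-- a monotone submodular set function with values in `{0, …, d}` is
computed by a decision tree of rank at most `d`. -/
theorem stmt19 {V : Type*} [Fintype V] [DecidableEq V] (d : ℕ) (h : Finset V → ℕ)
    (hran : ∀ S, h S ≤ d)
    (hmono : ∀ S T, S ⊆ T → h S ≤ h T)
    (hsub : ∀ S T : Finset V, ∀ j, S ⊆ T → j ∉ T →
      h (insert j T) + h S ≤ h (insert j S) + h T) :
    ∃ t : DTree V, (∀ S, t.evalT S = h S) ∧ t.rank ≤ d := by
  obtain ⟨t, ht, hrk⟩ := stmt19_aux d (Finset.univ.card) Finset.univ h rfl hran hmono hsub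
  exact ⟨t, fun S => by simpa using ht S, by omega⟩
end
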